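/- Fix bounds 0 ≤ d_{nm} ≤ e_{nm} and let F be the set of configurations (s_{t1},…,s_{tM}, s_{r1},…,s_{rN}) in ℝ² with ∑_m s_{tm} + ∑_n s_{rn} = 0 and d_{nm} ≤ ‖s_{tm} − s_{rn}‖₂ ≤ e_{nm} for all m, n. For an angle θ set p(θ) = (cos θ, −sin θ) and f_θ(S) = ∑_{m,n} (p(θ)ᵀ(s_{tm} − s_{rn}))². Let θ₁, θ₂ be two angles, Δθ = θ₂ − θ₁, and R = [[cos Δθ, sin Δθ],[−sin Δθ, cos Δθ]]. If S¹ ∈ F maximizes f_{θ₁} over F, then the configuration R·S¹ obtained by applying R to every antenna position belongs to F and maximizes f_{θ₂} over F. -/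

import Mathlib

/-!
The matrix `R` is a rotation, so it preserves the centre-of-mass constraint and all distances
and maps the feasible set onto itself, with inverse the rotation by `θ₁ - θ₂`. Moreover
`Rᵀ p(θ₂) = p(θ₁)`, so `f_{θ₂}(R S) = f_{θ₁}(S)` for every configuration `S`. Rotating by `R`
therefore transports maximizers of `f_{θ₁}` to maximizers of `f_{θ₂}`.
-/

open Matrix

/-- The feasible set of antenna configurations: center-of-mass constraint and
inter-antenna distance bounds `d_{nm} ≤ ‖s_{tm} − s_{rn}‖₂ ≤ e_{nm}`. -/
def FeasibleConfig (M N : ℕ) (d e : Fin N → Fin M → ℝ)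
    (st : Fin M → EuclideanSpace ℝ (Fin 2))
    (sr : Fin N → EuclideanSpace ℝ (Fin 2)) : Prop :=
  (∑ m, st m) + (∑ n, sr n) = 0 ∧
    ∀ n m, d n m ≤ ‖st m - sr n‖ ∧ ‖st m - sr n‖ ≤ e n m

/-- The target direction vector `p(θ) = (cos θ, −sin θ)`. -/
noncomputable def pvec (θ : ℝ) : EuclideanSpace ℝ (Fin 2) :=
  (WithLp.equiv 2 (Fin 2 → ℝ)).symm ![Real.cos θ, -Real.sin θ]

/-- The single-target objective `f_θ(S) = ∑_{m,n} (p(θ)ᵀ(s_{tm} − s_{rn}))²`. -/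
noncomputable def fobj (M N : ℕ) (θ : ℝ)
    (st : Fin M → EuclideanSpace ℝ (Fin 2))
    (sr : Fin N → EuclideanSpace ℝ (Fin 2)) : ℝ :=
  ∑ m, ∑ n, (∑ i, pvec θ i * (st m - sr n) i) ^ 2

/-- Applying a `2 × 2` matrix to a point of the plane. -/
noncomputable def matApply (A : Matrix (Fin 2) (Fin 2) ℝ)
    (v : EuclideanSpace ℝ (Fin 2)) : EuclideanSpace ℝ (Fin 2) :=
  (WithLp.equiv 2 (Fin 2 → ℝ)).symm (A *ᵥ fun i => v i)


open Real

noncomputable def rotMatrix (a : ℝ) : Matrix (Fin 2) (Fin 2) ℝ :=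
  !![cos a, sin a; -sin a, cos a]

lemma matApply_eq_toEuclideanLin (A : Matrix (Fin 2) (Fin 2) ℝ) :
    matApply A = Matrix.toEuclideanLin A :=
  rfl

lemma matApply_sub (A : Matrix (Fin 2) (Fin 2) ℝ) (u v : EuclideanSpace ℝ (Fin 2)) :
    matApply A (u - v) = matApply A u - matApply A v :=
  map_sub (Matrix.toEuclideanLin A) u v

lemma norm_matApply_rotMatrix (a : ℝ) (v : EuclideanSpace ℝ (Fin 2)) :
    ‖matApply (rotMatrix a) v‖ = ‖v‖ := by
  simp only [EuclideanSpace.norm_eq, Fin.sum_univ_two, Real.norm_eq_abs, sq_abs]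
  congr 1
  simp only [matApply, rotMatrix, WithLp.equiv_symm_apply, cons_mulVec, empty_mulVec, dotProduct,
    Fin.sum_univ_two, cons_val_zero, cons_val_one, cons_val_fin_one, neg_mul]
  linear_combination (v 0 ^ 2 + v 1 ^ 2) * sin_sq_add_cos_sq a

lemma vecMul_rotMatrix (θ a : ℝ) :
    WithLp.ofLp (pvec θ) ᵥ* rotMatrix a = WithLp.ofLp (pvec (θ - a)) := by
  ext i
  fin_cases i
  · simp [pvec, rotMatrix, vecMul, dotProduct, Fin.sum_univ_two, cos_sub]
  · simp only [vecMul, dotProduct, pvec, WithLp.equiv_symm_apply, rotMatrix, Fin.mk_one, of_apply,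
      cons_val', cons_val_one, cons_val_fin_one, Fin.sum_univ_two, cons_val_zero, neg_mul, sin_sub,
      neg_sub]
    ring

lemma FeasibleConfig.matApply {M N : ℕ} {d e : Fin N → Fin M → ℝ}
    {st : Fin M → EuclideanSpace ℝ (Fin 2)} {sr : Fin N → EuclideanSpace ℝ (Fin 2)}
    {A : Matrix (Fin 2) (Fin 2) ℝ} (hA : ∀ v, ‖matApply A v‖ = ‖v‖)
    (h : FeasibleConfig M N d e st sr) :
    FeasibleConfig M N d e (fun m => matApply A (st m)) (fun n => matApply A (sr n)) := by
  obtain ⟨hsum, hdist⟩ := h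
  refine ⟨?_, fun n m => by simpa only [← matApply_sub, hA] using hdist n m⟩
  simp only [matApply_eq_toEuclideanLin, ← map_sum, ← map_add, hsum, map_zero]

lemma fobj_matApply (M N : ℕ) {θ₁ θ₂ : ℝ} {A : Matrix (Fin 2) (Fin 2) ℝ}
    (hA : WithLp.ofLp (pvec θ₂) ᵥ* A = WithLp.ofLp (pvec θ₁))
    (st : Fin M → EuclideanSpace ℝ (Fin 2)) (sr : Fin N → EuclideanSpace ℝ (Fin 2)) :
    fobj M N θ₂ (fun m => matApply A (st m)) (fun n => matApply A (sr n)) =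
      fobj M N θ₁ st sr := by
  have key (w : EuclideanSpace ℝ (Fin 2)) :
      ∑ i, pvec θ₂ i * matApply A w i = ∑ i, pvec θ₁ i * w i := by
    change WithLp.ofLp (pvec θ₂) ⬝ᵥ (A *ᵥ WithLp.ofLp w) = WithLp.ofLp (pvec θ₁) ⬝ᵥ WithLp.ofLp w
    rw [dotProduct_mulVec, hA]
  simp only [fobj, ← matApply_sub, key]

theorem stmt8_general (M N : ℕ) (d e : Fin N → Fin M → ℝ)
    (θ₁ θ₂ : ℝ)
    (R : Matrix (Fin 2) (Fin 2) ℝ)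
    (hR : R = !![Real.cos (θ₂ - θ₁), Real.sin (θ₂ - θ₁);
                 -Real.sin (θ₂ - θ₁), Real.cos (θ₂ - θ₁)])
    (st : Fin M → EuclideanSpace ℝ (Fin 2))
    (sr : Fin N → EuclideanSpace ℝ (Fin 2))
    (hfeas : FeasibleConfig M N d e st sr)
    (hmax : ∀ st' sr', FeasibleConfig M N d e st' sr' →
      fobj M N θ₁ st' sr' ≤ fobj M N θ₁ st sr) :
    FeasibleConfig M N d e (fun m => matApply R (st m)) (fun n => matApply R (sr n)) ∧
      ∀ st' sr', FeasibleConfig M N d e st' sr' →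
        fobj M N θ₂ st' sr' ≤
          fobj M N θ₂ (fun m => matApply R (st m)) (fun n => matApply R (sr n)) := by
  change R = rotMatrix (θ₂ - θ₁) at hR
  subst hR
  refine ⟨hfeas.matApply (norm_matApply_rotMatrix _), fun st' sr' hfeas' => ?_⟩
  calc fobj M N θ₂ st' sr'
      = fobj M N θ₁ (fun m => matApply (rotMatrix (θ₁ - θ₂)) (st' m))
          (fun n => matApply (rotMatrix (θ₁ - θ₂)) (sr' n)) :=
        (fobj_matApply M N (by rw [vecMul_rotMatrix, sub_sub_cancel]) st' sr').symm
    _ ≤ fobj M N θ₁ st sr := hmax _ _ (hfeas'.matApply (norm_matApply_rotMatrix _))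
    _ = fobj M N θ₂ (fun m => matApply (rotMatrix (θ₂ - θ₁)) (st m))
          (fun n => matApply (rotMatrix (θ₂ - θ₁)) (sr n)) :=
        (fobj_matApply M N (by rw [vecMul_rotMatrix, sub_sub_cancel]) st sr).symm

/-- Proposition 3 (rotation covariance of the optimal antenna allocation):
if `S¹` maximizes `f_{θ₁}` over the feasible set, then the configuration
obtained by applying `R = [[cos Δθ, sin Δθ],[−sin Δθ, cos Δθ]]`,
`Δθ = θ₂ − θ₁`, to every antenna position is feasible and maximizes
`f_{θ₂}`. -/
theorem stmt8 (M N : ℕ) (d e : Fin N → Fin M → ℝ)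
    (hd : ∀ n m, 0 ≤ d n m) (hde : ∀ n m, d n m ≤ e n m) (θ₁ θ₂ : ℝ)
    (R : Matrix (Fin 2) (Fin 2) ℝ)
    (hR : R = !![Real.cos (θ₂ - θ₁), Real.sin (θ₂ - θ₁);
                 -Real.sin (θ₂ - θ₁), Real.cos (θ₂ - θ₁)])
    (st : Fin M → EuclideanSpace ℝ (Fin 2))
    (sr : Fin N → EuclideanSpace ℝ (Fin 2))
    (hfeas : FeasibleConfig M N d e st sr)
    (hmax : ∀ st' sr', FeasibleConfig M N d e st' sr' →
      fobj M N θ₁ st' sr' ≤ fobj M N θ₁ st sr) :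
    FeasibleConfig M N d e (fun m => matApply R (st m)) (fun n => matApply R (sr n)) ∧
      ∀ st' sr', FeasibleConfig M N d e st' sr' →
        fobj M N θ₂ st' sr' ≤
          fobj M N θ₂ (fun m => matApply R (st m)) (fun n => matApply R (sr n)) :=
  stmt8_general M N d e θ₁ θ₂ R hR st sr hfeas hmax
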